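/- arXiv:1702.03353 — 6 statements merged into one kernel-verified Lean document; each statement's English description precedes it below -/
import Mathlib

section
/- Let k > 0, F > 0 and suppose 0 < Δ where Δ = 1 − 4Fγ², γ = (F+k)/F. Then the determinants of the Jacobian at the two nontrivial equilibria are det Df(p±) = F(Δ − √Δ)/(2γ) and det Df(p∓) = F(Δ + √Δ)/(2γ). Since automatically Δ < 1, it follows that det Df(p±) < 0 (so p± is a saddle point) and det Df(p∓) > 0. -/
/-!
At an equilibrium with `v ≠ 0` one has `u v = F + k`, which collapses the Jacobian determinant
`(F + k)(F + v²) − 2F u v` to `(F + k)(v² − F)`. Both nontrivial equilibria are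
`((1 + s)/2, (1 − s)/(2γ))` with `s = ±√Δ`, and there `u v = Fγ = F + k` and
`v² − F = (s² − s)/(2γ²)`, so the determinant is `F(s² − s)/(2γ)`. Its sign is that of `Δ ∓ √Δ`,
and `0 < Δ < 1` gives `Δ < √Δ`.
-/

open Matrix

theorem det_grayScott_jacobian (F k u v : ℝ) :
    !![-(F + v ^ 2), -2 * u * v; v ^ 2, 2 * u * v - (F + k)].det =
      (F + k) * (F + v ^ 2) - 2 * F * (u * v) := by
  rw [det_fin_two_of]
  ring

theorem det_grayScott_jacobian_of_mul_eq {F k u v : ℝ} (h : u * v = F + k) :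
    !![-(F + v ^ 2), -2 * u * v; v ^ 2, 2 * u * v - (F + k)].det = (F + k) * (v ^ 2 - F) := by
  rw [det_grayScott_jacobian, h]
  ring

section Branch

variable {F γ s : ℝ} (hγ : γ ≠ 0) (hs : s ^ 2 = 1 - 4 * F * γ ^ 2)
include hγ hs

theorem grayScott_branch_mul_eq : (1 + s) / 2 * ((1 - s) / (2 * γ)) = F * γ := by
  field_simp
  linear_combination -hs

theorem grayScott_branch_sq_sub : ((1 - s) / (2 * γ)) ^ 2 - F = (s ^ 2 - s) / (2 * γ ^ 2) := by
  field_simp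
  linear_combination -hs

theorem det_grayScott_jacobian_at_branch {k : ℝ} (hγF : γ * F = F + k) :
    !![-(F + ((1 - s) / (2 * γ)) ^ 2), -2 * ((1 + s) / 2) * ((1 - s) / (2 * γ));
        ((1 - s) / (2 * γ)) ^ 2, 2 * ((1 + s) / 2) * ((1 - s) / (2 * γ)) - (F + k)].det =
      F * (s ^ 2 - s) / (2 * γ) := by
  have huv : (1 + s) / 2 * ((1 - s) / (2 * γ)) = F + k := by
    rw [grayScott_branch_mul_eq hγ hs, mul_comm, hγF]
  rw [det_grayScott_jacobian_of_mul_eq huv, grayScott_branch_sq_sub hγ hs, ← hγF]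
  field_simp

end Branch

/-- For `0 < Δ = 1 − 4Fγ²` (with `γ = (F+k)/F`), the Jacobian determinants at the two
nontrivial equilibria are `det Df(p±) = F(Δ − √Δ)/(2γ)` and `det Df(p∓) = F(Δ + √Δ)/(2γ)`;
since `Δ < 1`, `det Df(p±) < 0` (saddle) and `det Df(p∓) > 0`. -/
theorem grayScott_det_at_nontrivial_equilibria
    (k F : ℝ) (hk : 0 < k) (hF : 0 < F)
    (γ Δ : ℝ) (hγ : γ = (F + k) / F) (hΔ : Δ = 1 - 4 * F * γ ^ 2) (hΔpos : 0 < Δ)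
    (Df : ℝ → ℝ → Matrix (Fin 2) (Fin 2) ℝ)
    (hDf : ∀ u v : ℝ, Df u v = !![-(F + v ^ 2), -2 * u * v; v ^ 2, 2 * u * v - (F + k)])
    (pp pm : ℝ × ℝ)
    (hpp : pp = ((1 + Real.sqrt Δ) / 2, (1 - Real.sqrt Δ) / (2 * γ)))
    (hpm : pm = ((1 - Real.sqrt Δ) / 2, (1 + Real.sqrt Δ) / (2 * γ))) :
    (Df pp.1 pp.2).det = F * (Δ - Real.sqrt Δ) / (2 * γ) ∧
    (Df pm.1 pm.2).det = F * (Δ + Real.sqrt Δ) / (2 * γ) ∧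
    Δ < 1 ∧
    (Df pp.1 pp.2).det < 0 ∧
    0 < (Df pm.1 pm.2).det := by
  have hγpos : 0 < γ := hγ ▸ by positivity
  have hγF : γ * F = F + k := by rw [hγ]; field_simp
  have hsq : Real.sqrt Δ ^ 2 = Δ := Real.sq_sqrt hΔpos.le
  have hΔ_lt_one : Δ < 1 := hΔ ▸ sub_lt_self 1 (by positivity)
  have hΔ_lt_sqrt : Δ < Real.sqrt Δ :=
    (Real.lt_sqrt hΔpos.le).2 (pow_lt_self_of_lt_one₀ hΔpos hΔ_lt_one one_lt_two)
  have hplus := det_grayScott_jacobian_at_branch hγpos.ne' (hsq.trans hΔ) hγF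
  have hminus := det_grayScott_jacobian_at_branch (s := -Real.sqrt Δ) hγpos.ne'
    ((neg_sq _).trans (hsq.trans hΔ)) hγF
  rw [hsq] at hplus
  rw [neg_sq, hsq, sub_neg_eq_add, ← sub_eq_add_neg, sub_neg_eq_add] at hminus
  subst hpp hpm
  rw [hDf, hDf, hplus, hminus]
  refine ⟨rfl, rfl, hΔ_lt_one, ?_, by positivity⟩
  exact div_neg_of_neg_of_pos (mul_neg_of_pos_of_neg hF (sub_neg.2 hΔ_lt_sqrt)) (by positivity)
end

section
/- Let 0 < k < 1/16 and define F = (√k − 2k − √(k − 4k√k))/2. Then F > 0, Δ = 1 − 4Fγ² > 0 where γ = (F+k)/F, and the trace of the Jacobian at the nontrivial equilibrium p∓ vanishes: tr Df(p∓) = 0 (Hopf curve). Similarly, with F' = (√k − 2k + √(k − 4k√k))/2 one has F' > 0, the corresponding Δ' > 0, and tr Df(p±) = 0 (curve of symmetric saddles). -/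
open Matrix

/-- Hopf curve and curve of symmetric saddles: for `0 < k < 1/16`, with
`F = (√k − 2k − √(k − 4k√k))/2` one has `F > 0`, `Δ > 0` and `tr Df(p∓) = 0`;
with `F' = (√k − 2k + √(k − 4k√k))/2` one has `F' > 0`, `Δ' > 0` and `tr Df(p±) = 0`. -/
theorem grayScott_hopf_and_symmetric_saddle_curves
    (k : ℝ) (hk : 0 < k) (hk' : k < 1 / 16)
    (F F' : ℝ)
    (hFdef : F = (Real.sqrt k - 2 * k - Real.sqrt (k - 4 * k * Real.sqrt k)) / 2)
    (hF'def : F' = (Real.sqrt k - 2 * k + Real.sqrt (k - 4 * k * Real.sqrt k)) / 2)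
    (γ Δ γ' Δ' : ℝ)
    (hγ : γ = (F + k) / F) (hΔ : Δ = 1 - 4 * F * γ ^ 2)
    (hγ' : γ' = (F' + k) / F') (hΔ' : Δ' = 1 - 4 * F' * γ' ^ 2)
    (Df : ℝ → ℝ → ℝ → Matrix (Fin 2) (Fin 2) ℝ)
    (hDf : ∀ G u v : ℝ,
      Df G u v = !![-(G + v ^ 2), -2 * u * v; v ^ 2, 2 * u * v - (G + k)]) :
    (0 < F ∧ 0 < Δ ∧
      Matrix.trace
        (Df F ((1 - Real.sqrt Δ) / 2) ((1 + Real.sqrt Δ) / (2 * γ))) = 0) ∧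
    (0 < F' ∧ 0 < Δ' ∧
      Matrix.trace
        (Df F' ((1 + Real.sqrt Δ') / 2) ((1 - Real.sqrt Δ') / (2 * γ'))) = 0) := by
  set s := Real.sqrt k with hs
  have hs0 : 0 < s := Real.sqrt_pos.mpr hk
  have hsk : s ^ 2 = k := Real.sq_sqrt hk.le
  have hs4 : s < 1 / 4 := by
    have h : s < Real.sqrt (1 / 16) := Real.sqrt_lt_sqrt hk.le hk'
    rwa [show (1/16:ℝ) = (1/4)^2 by norm_num, Real.sqrt_sq (by norm_num)] at h
  set t := Real.sqrt (1 - 4 * s) with htdef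
  have ht0 : 0 ≤ t := Real.sqrt_nonneg _
  have ht2 : t ^ 2 = 1 - 4 * s := Real.sq_sqrt (by linarith)
  have htpos : 0 < t := Real.sqrt_pos.mpr (by linarith)
  have ht1 : t < 1 := by nlinarith
  have h1t : (0:ℝ) < 1 - t := by linarith
  have h1t' : (0:ℝ) < 1 + t := by linarith
  have ht1' : (1:ℝ) - t ≠ 0 := h1t.ne'
  have ht1'' : (1:ℝ) + t ≠ 0 := h1t'.ne'
  have hr : Real.sqrt (k - 4 * k * s) = s * t := by
    rw [show k - 4 * k * s = (s * t) ^ 2 by nlinarith, Real.sqrt_sq (by positivity)]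
  have hst : s = (1 - t ^ 2) / 4 := by linarith
  have hFt : F = (1 - t ^ 2) * (1 - t) ^ 2 / 16 := by
    rw [hFdef, hr, ← hsk, hst]; ring
  have hF't : F' = (1 - t ^ 2) * (1 + t) ^ 2 / 16 := by
    rw [hF'def, hr, ← hsk, hst]; ring
  have hF0 : 0 < F := by rw [hFt]; exact div_pos (mul_pos (by nlinarith) (pow_pos h1t 2)) (by norm_num)
  have hF'0 : 0 < F' := by rw [hF't]; exact div_pos (mul_pos (by nlinarith) (pow_pos h1t' 2)) (by norm_num)
  have h1t2 : (0:ℝ) < 1 - t ^ 2 := by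
    have h : 1 - t ^ 2 = 4 * s := by rw [ht2]; ring
    linarith
  have hden : (0:ℝ) < (1 - t ^ 2) * (1 - t) ^ 2 / 16 :=
    div_pos (mul_pos h1t2 (pow_pos h1t 2)) (by norm_num)
  have hden' : (0:ℝ) < (1 - t ^ 2) * (1 + t) ^ 2 / 16 :=
    div_pos (mul_pos h1t2 (pow_pos h1t' 2)) (by norm_num)
  have hFk : F + k = (1 - t ^ 2) * (1 - t) / 8 := by rw [hFt, ← hsk, hst]; ring
  have hF'k : F' + k = (1 - t ^ 2) * (1 + t) / 8 := by rw [hF't, ← hsk, hst]; ring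
  have hγt : γ = 2 / (1 - t) := by
    rw [hγ, hFk, hFt, div_eq_div_iff hden.ne' h1t.ne']; ring
  have hγ't : γ' = 2 / (1 + t) := by
    rw [hγ', hF'k, hF't, div_eq_div_iff hden'.ne' h1t'.ne']; ring
  have hΔt : Δ = t ^ 2 := by
    rw [hΔ, hFt, hγt]; field_simp; ring
  have hΔ't : Δ' = t ^ 2 := by
    rw [hΔ', hF't, hγ't]; field_simp; ring
  have hΔ0 : 0 < Δ := by rw [hΔt]; positivity
  have hΔ'0 : 0 < Δ' := by rw [hΔ't]; positivity
  have hsqΔ : Real.sqrt Δ = t := by rw [hΔt, Real.sqrt_sq ht0]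
  have hsqΔ' : Real.sqrt Δ' = t := by rw [hΔ't, Real.sqrt_sq ht0]
  have hv : (1 + t) / (2 * γ) = (1 - t ^ 2) / 4 := by
    rw [hγt]; field_simp; ring
  have hv' : (1 - t) / (2 * γ') = (1 - t ^ 2) / 4 := by
    rw [hγ't]; field_simp; ring
  refine ⟨⟨hF0, hΔ0, ?_⟩, ⟨hF'0, hΔ'0, ?_⟩⟩
  · rw [hDf, Matrix.trace_fin_two_of, hsqΔ, hv, hFt, ← hsk, hst]; ring
  · rw [hDf, Matrix.trace_fin_two_of, hsqΔ', hv', hF't, ← hsk, hst]; ring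
end

section
/- Let k > 0, F > 0. There exists an equilibrium (u,v) of the Gray–Scott kinetics with v > 0 at which both the trace and the determinant of the Jacobian matrix vanish if and only if (k,F) = (1/16, 1/16); in that case the equilibrium is (u,v) = (1/2, 1/4). (This is the parameter value of the Takens–Bogdanov point.) -/
open Matrix

lemma gs_aux (k F u v : ℝ) (hk : 0 < k) (hF : 0 < F) (hv : 0 < v)
    (h1 : -u * v ^ 2 + F * (1 - u) = 0)
    (h2 : u * v ^ 2 - (F + k) * v = 0)
    (htr : -(F + v ^ 2) + (2 * u * v - (F + k)) = 0)
    (hdet : -(F + v ^ 2) * (2 * u * v - (F + k)) - -2 * u * v * v ^ 2 = 0) :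
    k = 1 / 16 ∧ F = 1 / 16 ∧ u = 1 / 2 ∧ v = 1 / 4 := by
  have hvne : v ≠ 0 := ne_of_gt hv
  have huv : u * v = F + k := by
    have : (u * v - (F + k)) * v = 0 := by ring_nf; nlinarith [h2]
    rcases mul_eq_zero.mp this with h | h
    · linarith
    · exact absurd h hvne
  have hv2 : v ^ 2 = k := by nlinarith [htr, huv]
  have hFk : F = k := by
    have h : (F + k) * (k - F) = 0 := by nlinarith [hdet, huv, hv2]
    rcases mul_eq_zero.mp h with h | h
    · linarith
    · linarith
  -- u = 2v
  have hu2v : u = 2 * v := by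
    have : u * v = 2 * v * v := by nlinarith [huv, hv2, hFk]
    have := mul_right_cancel₀ hvne this
    linarith
  -- from h1: F(1-u) = u v^2 = 2v·k = 2v·F ⇒ 1 - u = 2v ⇒ 1 = 4v
  have h4v : v = 1 / 4 := by
    have hFu : F * (1 - u) = u * v ^ 2 := by linarith
    have : F * (1 - 2 * v) = 2 * v * F := by
      rw [hu2v] at hFu
      nlinarith [hFu, hv2, hFk]
    have h1u : 1 - 2 * v = 2 * v := by
      have := mul_left_cancel₀ (ne_of_gt hF) (by linarith : F * (1 - 2 * v) = F * (2 * v))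
      linarith
    linarith
  have hu : u = 1 / 2 := by rw [hu2v, h4v]; norm_num
  have hkval : k = 1 / 16 := by rw [← hv2, h4v]; norm_num
  exact ⟨hkval, by linarith, hu, h4v⟩

/-- Takens–Bogdanov point: there exists an equilibrium `(u,v)` with `v > 0` at which
both the trace and determinant of the Jacobian vanish iff `(k,F) = (1/16, 1/16)`;
in that case the equilibrium is `(1/2, 1/4)`. -/
theorem grayScott_takens_bogdanov_point
    (k F : ℝ) (hk : 0 < k) (hF : 0 < F) :
    ((∃ u v : ℝ, 0 < v ∧
        (-u * v ^ 2 + F * (1 - u), u * v ^ 2 - (F + k) * v) = ((0 : ℝ), (0 : ℝ)) ∧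
        Matrix.trace (!![-(F + v ^ 2), -2 * u * v; v ^ 2, 2 * u * v - (F + k)] :
          Matrix (Fin 2) (Fin 2) ℝ) = 0 ∧
        (!![-(F + v ^ 2), -2 * u * v; v ^ 2, 2 * u * v - (F + k)] :
          Matrix (Fin 2) (Fin 2) ℝ).det = 0)
      ↔ (k = 1 / 16 ∧ F = 1 / 16)) ∧
    (k = 1 / 16 → F = 1 / 16 →
      ∀ u v : ℝ, 0 < v →
        (-u * v ^ 2 + F * (1 - u), u * v ^ 2 - (F + k) * v) = ((0 : ℝ), (0 : ℝ)) →
        Matrix.trace (!![-(F + v ^ 2), -2 * u * v; v ^ 2, 2 * u * v - (F + k)] :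
          Matrix (Fin 2) (Fin 2) ℝ) = 0 →
        (!![-(F + v ^ 2), -2 * u * v; v ^ 2, 2 * u * v - (F + k)] :
          Matrix (Fin 2) (Fin 2) ℝ).det = 0 →
        (u, v) = (1 / 2, 1 / 4)) := by
  constructor
  · constructor
    · rintro ⟨u, v, hv, heq, htr, hdet⟩
      have h1 : -u * v ^ 2 + F * (1 - u) = 0 := (Prod.mk.injEq _ _ _ _ ▸ heq).1
      have h2 : u * v ^ 2 - (F + k) * v = 0 := (Prod.mk.injEq _ _ _ _ ▸ heq).2
      rw [Matrix.trace_fin_two_of] at htr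
      rw [Matrix.det_fin_two_of] at hdet
      obtain ⟨hk', hF', _, _⟩ := gs_aux k F u v hk hF hv h1 h2 (by linarith) (by linarith [hdet])
      exact ⟨hk', hF'⟩
    · rintro ⟨hk', hF'⟩
      subst hk' hF'
      refine ⟨1/2, 1/4, by norm_num, by norm_num, ?_, ?_⟩
      · rw [Matrix.trace_fin_two_of]; norm_num
      · rw [Matrix.det_fin_two_of]; norm_num
  · intro hk' hF' u v hv heq htr hdet
    have h1 : -u * v ^ 2 + F * (1 - u) = 0 := (Prod.mk.injEq _ _ _ _ ▸ heq).1
    have h2 : u * v ^ 2 - (F + k) * v = 0 := (Prod.mk.injEq _ _ _ _ ▸ heq).2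
    rw [Matrix.trace_fin_two_of] at htr
    rw [Matrix.det_fin_two_of] at hdet
    obtain ⟨_, _, hu, hvv⟩ := gs_aux k F u v hk hF hv h1 h2 (by linarith) (by linarith [hdet])
    rw [hu, hvv]
end

section
/- Consider the map Φ : ℝ⁴ → ℝ⁴ given by Φ(u,v,k,F) = (−uv² + F(1−u), uv² − (F+k)v, tr Df(u,v), det Df(u,v)), where Df(u,v) = [[−(F+v²), −2uv], [v², 2uv − (F+k)]] so that tr Df(u,v) = −2F − k + 2uv − v² and det Df(u,v) = F² + Fk − 2Fuv + Fv² + kv². Then the Jacobian determinant of Φ at the point (u,v,k,F) = (1/2, 1/4, 1/16, 1/16) equals −1/512; in particular Φ is a local diffeomorphism near the Takens–Bogdanov point (this is the transversality condition for the Takens–Bogdanov bifurcation). -/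
/-!
Φ is polynomial, so in the standard basis its derivative is the matrix of partial derivatives
`∂Φᵢ/∂xⱼ`, each a one-variable derivative along a coordinate line. Symbolically this is `Df`
bordered by the derivatives in `(k, F)`, followed by the gradients of `tr Df` and `det Df`; at
`(1/2, 1/4, 1/16, 1/16)` it is a rational 4 × 4 matrix with determinant `-1/512`.
-/

section JacobianMatrix

variable {𝕜 ι κ : Type*} [NontriviallyNormedField 𝕜] [DecidableEq ι]

noncomputable def jacobianMatrix (Φ : (ι → 𝕜) → κ → 𝕜) (x : ι → 𝕜) : Matrix κ ι 𝕜 :=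
  Matrix.of fun i j => deriv (fun t => Φ (Function.update x j t) i) (x j)

variable [Fintype ι]

theorem toMatrix'_fderiv [Fintype κ] {Φ : (ι → 𝕜) → κ → 𝕜} {x : ι → 𝕜}
    (hΦ : DifferentiableAt 𝕜 Φ x) :
    LinearMap.toMatrix' (fderiv 𝕜 Φ x : (ι → 𝕜) →ₗ[𝕜] κ → 𝕜) = jacobianMatrix Φ x := by
  ext i j
  have hline : HasDerivAt (Φ ∘ Function.update x j) (fderiv 𝕜 Φ x (Pi.single j 1)) (x j) :=
    hΦ.hasFDerivAt.comp_hasDerivAt_of_eq (x j) (hasDerivAt_update x j (x j))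
      (Function.update_eq_self j x).symm
  exact ((hasDerivAt_pi.mp hline) i).deriv.symm

theorem det_fderiv_eq_det_jacobianMatrix {Φ : (ι → 𝕜) → ι → 𝕜} {x : ι → 𝕜}
    (hΦ : DifferentiableAt 𝕜 Φ x) :
    LinearMap.det (fderiv 𝕜 Φ x : (ι → 𝕜) →ₗ[𝕜] ι → 𝕜) = (jacobianMatrix Φ x).det := by
  rw [← LinearMap.det_toMatrix', toMatrix'_fderiv hΦ]

end JacobianMatrix

/-- The coordinates are `(x 0, x 1, x 2, x 3) = (u, v, k, F)`. -/
noncomputable def grayScottBTMap (x : Fin 4 → ℝ) : Fin 4 → ℝ :=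
  ![-(x 0) * (x 1) ^ 2 + (x 3) * (1 - x 0),
    (x 0) * (x 1) ^ 2 - ((x 3) + (x 2)) * (x 1),
    -2 * (x 3) - (x 2) + 2 * (x 0) * (x 1) - (x 1) ^ 2,
    (x 3) ^ 2 + (x 3) * (x 2) - 2 * (x 3) * (x 0) * (x 1)
      + (x 3) * (x 1) ^ 2 + (x 2) * (x 1) ^ 2]

theorem differentiable_grayScottBTMap : Differentiable ℝ grayScottBTMap := by
  refine differentiable_pi.mpr fun i => ?_
  fin_cases i <;>
    simp only [grayScottBTMap, Fin.isValue, Fin.zero_eta, Fin.mk_one, Fin.reduceFinMk,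
      Matrix.cons_val_zero, Matrix.cons_val_one, Matrix.cons_val] <;>
    fun_prop

theorem jacobianMatrix_grayScottBTMap (u v k F : ℝ) :
    jacobianMatrix grayScottBTMap ![u, v, k, F] =
      !![-(F + v ^ 2), -2 * u * v, 0, 1 - u;
        v ^ 2, 2 * u * v - (F + k), -v, -v;
        2 * v, 2 * u - 2 * v, -1, -2;
        -2 * F * v, -2 * F * u + 2 * F * v + 2 * k * v, F + v ^ 2,
          2 * F + k - 2 * u * v + v ^ 2] := by
  ext i j
  fin_cases i <;> fin_cases j <;>
    simp (disch := fun_prop) [jacobianMatrix, grayScottBTMap, Function.update_apply,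
      deriv_fun_sub, deriv_fun_mul, deriv_fun_pow] <;>
    ring

/-- Transversality at the Takens–Bogdanov point: the Jacobian determinant of
`Φ(u,v,k,F) = (f₁, f₂, tr Df, det Df)` at `(u,v,k,F) = (1/2, 1/4, 1/16, 1/16)`
equals `−1/512`. Here coordinates are `x 0 = u`, `x 1 = v`, `x 2 = k`, `x 3 = F`. -/
theorem grayScott_BT_transversality
    (Φ : (Fin 4 → ℝ) → (Fin 4 → ℝ))
    (hΦ : ∀ x : Fin 4 → ℝ,
      Φ x = ![-(x 0) * (x 1) ^ 2 + (x 3) * (1 - x 0),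
              (x 0) * (x 1) ^ 2 - ((x 3) + (x 2)) * (x 1),
              -2 * (x 3) - (x 2) + 2 * (x 0) * (x 1) - (x 1) ^ 2,
              (x 3) ^ 2 + (x 3) * (x 2) - 2 * (x 3) * (x 0) * (x 1)
                + (x 3) * (x 1) ^ 2 + (x 2) * (x 1) ^ 2]) :
    LinearMap.det
      ((fderiv ℝ Φ ![1 / 2, 1 / 4, 1 / 16, 1 / 16]).toLinearMap) = -(1 / 512) := by
  obtain rfl : Φ = grayScottBTMap := funext hΦ
  have hJ : jacobianMatrix grayScottBTMap ![1 / 2, 1 / 4, 1 / 16, 1 / 16] =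
      !![-(1 / 8), -(1 / 4), 0, 1 / 2;
        1 / 16, 1 / 8, -(1 / 4), -(1 / 4);
        1 / 2, 1 / 2, -1, -2;
        -(1 / 32), 0, 1 / 8, 0] := by
    rw [jacobianMatrix_grayScottBTMap]
    norm_num
  rw [det_fderiv_eq_det_jacobianMatrix differentiable_grayScottBTMap.differentiableAt, hJ]
  simp [Matrix.det_succ_row_zero, Fin.sum_univ_succ, Fin.succAbove]
  norm_num
end

section
/- Fix (k,F) = (1/16, 1/16) and let v₀ = (−2,1), v₁ = (0,8), w₀ = (−1/2,0), w₁ = (1/16,1/8) ∈ ℝ². Define g₀, g₁ : ℝ² → ℝ by gᵢ(y₁,y₂) = ⟨ f( (1/2,1/4) + y₁ v₀ + y₂ v₁ ), wᵢ ⟩, where ⟨·,·⟩ is the standard inner product on ℝ². Then the quadratic normal-form coefficients at the Takens–Bogdanov point satisfy the nondegeneracy conditions: ∂²g₀/∂y₁²(0,0) + ∂²g₁/∂y₁∂y₂(0,0) = −1/2 ≠ 0 and (∂²g₁/∂y₁²(0,0))² = 1/256, in particular ∂²g₁/∂y₁²(0,0) ≠ 0. -/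

private lemma deriv_cubic (a b c d x : ℝ) :
    deriv (fun s : ℝ => a + b * s + c * s ^ 2 + d * s ^ 3) x
      = b + 2 * c * x + 3 * d * x ^ 2 := by
  have h : HasDerivAt (fun s : ℝ => a + b * s + c * s ^ 2 + d * s ^ 3)
      (0 + b * 1 + c * (↑2 * x ^ 1) + d * (↑3 * x ^ 2)) x := by
    exact (((hasDerivAt_const x a).add ((hasDerivAt_id x).const_mul b)).add
      ((hasDerivAt_pow 2 x).const_mul c)).add ((hasDerivAt_pow 3 x).const_mul d)
  rw [h.deriv]; norm_num; ring

/-- Nondegeneracy of the quadratic normal-form coefficients at the Takens–Bogdanov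
point `(k,F) = (1/16,1/16)`, equilibrium `(1/2,1/4)`.  With `v₀ = (−2,1)`, `v₁ = (0,8)`,
`w₀ = (−1/2,0)`, `w₁ = (1/16,1/8)` and `gᵢ(y₁,y₂) = ⟨f((1/2,1/4) + y₁v₀ + y₂v₁), wᵢ⟩`,
one has `∂²g₀/∂y₁²(0,0) + ∂²g₁/∂y₁∂y₂(0,0) = −1/2 ≠ 0` and
`(∂²g₁/∂y₁²(0,0))² = 1/256`, in particular `∂²g₁/∂y₁²(0,0) ≠ 0`. -/
theorem grayScott_BT_nondegeneracy
    (g₀ g₁ : ℝ → ℝ → ℝ)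
    (hg₀ : ∀ y₁ y₂ : ℝ,
      g₀ y₁ y₂ =
        (-(1 / 2)) * (-(1 / 2 + y₁ * (-2) + y₂ * 0) * (1 / 4 + y₁ * 1 + y₂ * 8) ^ 2
            + (1 / 16) * (1 - (1 / 2 + y₁ * (-2) + y₂ * 0)))
        + 0 * ((1 / 2 + y₁ * (-2) + y₂ * 0) * (1 / 4 + y₁ * 1 + y₂ * 8) ^ 2
            - (1 / 16 + 1 / 16) * (1 / 4 + y₁ * 1 + y₂ * 8)))
    (hg₁ : ∀ y₁ y₂ : ℝ,
      g₁ y₁ y₂ =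
        (1 / 16) * (-(1 / 2 + y₁ * (-2) + y₂ * 0) * (1 / 4 + y₁ * 1 + y₂ * 8) ^ 2
            + (1 / 16) * (1 - (1 / 2 + y₁ * (-2) + y₂ * 0)))
        + (1 / 8) * ((1 / 2 + y₁ * (-2) + y₂ * 0) * (1 / 4 + y₁ * 1 + y₂ * 8) ^ 2
            - (1 / 16 + 1 / 16) * (1 / 4 + y₁ * 1 + y₂ * 8))) :
    (deriv (fun y₁ : ℝ => deriv (fun s : ℝ => g₀ s 0) y₁) 0
        + deriv (fun y₁ : ℝ => deriv (fun y₂ : ℝ => g₁ y₁ y₂) 0) 0 = -(1 / 2) ∧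
      deriv (fun y₁ : ℝ => deriv (fun s : ℝ => g₀ s 0) y₁) 0
        + deriv (fun y₁ : ℝ => deriv (fun y₂ : ℝ => g₁ y₁ y₂) 0) 0 ≠ 0) ∧
    ((deriv (fun y₁ : ℝ => deriv (fun s : ℝ => g₁ s 0) y₁) 0) ^ 2 = 1 / 256 ∧
      deriv (fun y₁ : ℝ => deriv (fun s : ℝ => g₁ s 0) y₁) 0 ≠ 0) := by

  have e0 : (fun s : ℝ => g₀ s 0) = fun s : ℝ =>
      0 + 0 * s + (-(1/4)) * s ^ 2 + (-1) * s ^ 3 := by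
    funext s; rw [hg₀]; ring
  have e1 : (fun s : ℝ => g₁ s 0) = fun s : ℝ =>
      0 + 0 * s + (-(1/32)) * s ^ 2 + (-(1/8)) * s ^ 3 := by
    funext s; rw [hg₁]; ring
  have d0 : (fun y₁ : ℝ => deriv (fun s : ℝ => g₀ s 0) y₁)
      = fun y₁ : ℝ => 0 + (-(1/2)) * y₁ + (-3) * y₁ ^ 2 + 0 * y₁ ^ 3 := by
    funext y₁; rw [e0, deriv_cubic]; ring
  have d1 : (fun y₁ : ℝ => deriv (fun s : ℝ => g₁ s 0) y₁)
      = fun y₁ : ℝ => 0 + (-(1/16)) * y₁ + (-(3/8)) * y₁ ^ 2 + 0 * y₁ ^ 3 := by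
    funext y₁; rw [e1, deriv_cubic]; ring
  have dm : (fun y₁ : ℝ => deriv (fun y₂ : ℝ => g₁ y₁ y₂) 0)
      = fun y₁ : ℝ => 0 + 0 * y₁ + (-2) * y₁ ^ 2 + 0 * y₁ ^ 3 := by
    funext y₁
    have e2 : (fun y₂ : ℝ => g₁ y₁ y₂) = fun y₂ : ℝ =>
        ((-(1/32)) * y₁ ^ 2 + (-(1/8)) * y₁ ^ 3) + (-2 * y₁ ^ 2) * y₂
          + (2 - 8 * y₁) * y₂ ^ 2 + 0 * y₂ ^ 3 := by
      funext y₂; rw [hg₁]; ring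
    rw [e2, deriv_cubic]; ring
  rw [d0, d1, dm, deriv_cubic, deriv_cubic, deriv_cubic]
  norm_num
end

section
/- Define the polynomials Q₁(x,y) = x⁸(4y − 66) + 8x⁷(94 − 17y) + 252x⁶(3y − 10) + x⁵(3816 − 1596y) + 110x⁴(15y − 28) + x³(1416 − 924y) + x²(286y − 372) + x(52 − 46y) + 3(y − 1) and Q₂(x,y) = 1 − 4x − y². Then (x,y) = (3/16, 1/2) is a common zero of Q₁ and Q₂, and every common real zero (x,y) of Q₁ and Q₂ satisfies y = 1 or y = 1/2. (Via the substitution x = √k, y = √(1 − 4√k), this shows that along the Hopf curve the first Liapunov coefficient of the Gray–Scott kinetics vanishes exactly at k = 9/256.) -/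
/-- The polynomials `Q₁`, `Q₂` arising from the first Liapunov coefficient of the
Gray–Scott kinetics along the Hopf curve (in the variables `x = √k`,
`y = √(1 − 4√k)`): `(3/16, 1/2)` is a common zero, and every common real zero
satisfies `y = 1` or `y = 1/2`. -/
theorem grayScott_liapunov_resultant
    (Q₁ Q₂ : ℝ → ℝ → ℝ)
    (hQ₁ : ∀ x y : ℝ,
      Q₁ x y = x ^ 8 * (4 * y - 66) + 8 * x ^ 7 * (94 - 17 * y)
        + 252 * x ^ 6 * (3 * y - 10) + x ^ 5 * (3816 - 1596 * y)
        + 110 * x ^ 4 * (15 * y - 28) + x ^ 3 * (1416 - 924 * y)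
        + x ^ 2 * (286 * y - 372) + x * (52 - 46 * y) + 3 * (y - 1))
    (hQ₂ : ∀ x y : ℝ, Q₂ x y = 1 - 4 * x - y ^ 2) :
    (Q₁ (3 / 16) (1 / 2) = 0 ∧ Q₂ (3 / 16) (1 / 2) = 0) ∧
    (∀ x y : ℝ, Q₁ x y = 0 → Q₂ x y = 0 → y = 1 ∨ y = 1 / 2) := by
  constructor
  · refine ⟨?_, ?_⟩
    · rw [hQ₁]; norm_num
    · rw [hQ₂]; norm_num
  · intro x y h1 h2
    rw [hQ₁] at h1
    rw [hQ₂] at h2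
    have hx : x = (1 - y ^ 2) / 4 := by linarith
    subst hx
    have key : (y - 1) ^ 16 * (2 * y - 1) = 0 := by linear_combination 32768 * h1
    rcases mul_eq_zero.mp key with h | h
    · left
      have := pow_eq_zero_iff (n := 16) (by norm_num) |>.mp h
      linarith
    · right; linarith
end
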